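/- arXiv:1711.09858 — 2 statements merged into one kernel-verified Lean document; each statement's English description precedes it below -/
import Mathlib

section
/- Let T_1, …, T_N : ℝ → ℝ be similitudes of the form T_i(x) = r_i x + b_i with r_i > 0 and Σ_i r_i = 1. Suppose {F_n} is a decreasing sequence of measurable subsets of ℝ of finite measure with F_{n+1} = ∪_{i=1}^N T_i(F_n) for all n ≥ 0. Then the sequence α_n = |F_n| is convex: α_n ≤ (α_{n−1} + α_{n+1})/2 for all n ≥ 1. -/
open MeasureTheory Set Pointwise

lemma volume_image_affine (r c : ℝ) (hr : 0 < r) (S : Set ℝ) :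
    volume ((fun x => r * x + c) '' S) = ENNReal.ofReal r * volume S := by
  have h1 : (fun x => r * x + c) '' S = (fun y => y + c) '' (r • S) := by
    rw [← image_smul, image_image]
    simp [smul_eq_mul]
  rw [h1, image_add_right, measure_preimage_add_right, Measure.addHaar_smul]
  simp [abs_of_pos hr]

/-- For a decreasing self-similar sequence of sets generated by similitudes
whose contraction ratios sum to 1, the sequence of measures is convex. -/
theorem measure_convex_of_selfSimilar (N : ℕ) (r b : Fin N → ℝ)
    (hr : ∀ i, 0 < r i) (hsum : ∑ i, r i = 1)
    (F : ℕ → Set ℝ) (hmeas : ∀ n, MeasurableSet (F n))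
    (hfin : ∀ n, volume (F n) ≠ ⊤)
    (hdec : ∀ n, F (n + 1) ⊆ F n)
    (hrec : ∀ n, F (n + 1) = ⋃ i, (fun x => r i * x + b i) '' F n) :
    ∀ n, volume (F (n + 1)) ≤ (volume (F n) + volume (F (n + 2))) / 2 := by
  intro n
  -- key subset: F(n+1) \ F(n+2) ⊆ ⋃ i, T_i '' (F n \ F (n+1))
  have hsub : F (n + 1) \ F (n + 2) ⊆ ⋃ i, (fun x => r i * x + b i) '' (F n \ F (n + 1)) := by
    intro x hx
    obtain ⟨hx1, hx2⟩ := hx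
    rw [hrec n] at hx1
    obtain ⟨_, ⟨i, rfl⟩, y, hy, rfl⟩ := hx1
    refine mem_iUnion.2 ⟨i, ⟨y, ⟨hy, fun hy' => hx2 ?_⟩, rfl⟩⟩
    rw [hrec (n + 1)]
    exact mem_iUnion.2 ⟨i, ⟨y, hy', rfl⟩⟩
  have hkey : volume (F (n + 1) \ F (n + 2)) ≤ volume (F n \ F (n + 1)) := by
    calc volume (F (n + 1) \ F (n + 2)) ≤
        volume (⋃ i, (fun x => r i * x + b i) '' (F n \ F (n + 1))) :=
          measure_mono hsub
      _ ≤ ∑ i, volume ((fun x => r i * x + b i) '' (F n \ F (n + 1))) :=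
          measure_iUnion_fintype_le _ _
      _ = ∑ i, ENNReal.ofReal (r i) * volume (F n \ F (n + 1)) := by
          simp_rw [volume_image_affine _ _ (hr _)]
      _ = volume (F n \ F (n + 1)) := by
          rw [← Finset.sum_mul, ← ENNReal.ofReal_sum_of_nonneg
            (fun i _ => (hr i).le), hsum]
          simp
  -- turn into measure differences
  have e1 : volume (F (n + 1) \ F (n + 2)) = volume (F (n + 1)) - volume (F (n + 2)) :=
    measure_diff (hdec (n + 1)) (hmeas (n + 2)).nullMeasurableSet (hfin (n + 2))
  have e2 : volume (F n \ F (n + 1)) = volume (F n) - volume (F (n + 1)) :=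
    measure_diff (hdec n) (hmeas (n + 1)).nullMeasurableSet (hfin (n + 1))
  rw [e1, e2] at hkey
  have h01 : volume (F (n + 1)) ≤ volume (F n) := measure_mono (hdec n)
  have h2 : volume (F (n + 1)) + volume (F (n + 1)) ≤ volume (F n) + volume (F (n + 2)) := by
    have := tsub_le_iff_right.mp hkey
    calc volume (F (n + 1)) + volume (F (n + 1))
        ≤ (volume (F n) - volume (F (n + 1)) + volume (F (n + 2))) + volume (F (n + 1)) :=
          add_le_add_left this _
      _ = volume (F n) - volume (F (n + 1)) + volume (F (n + 1)) + volume (F (n + 2)) := by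
          ring
      _ = volume (F n) + volume (F (n + 2)) := by
          rw [tsub_add_cancel_of_le h01]
  rw [ENNReal.le_div_iff_mul_le (Or.inl two_ne_zero) (Or.inl ENNReal.ofNat_ne_top), mul_two]
  exact h2
end

section
/- Suppose {A_n} is a sequence of subsets of ℝ² with A_{n+1} ⊆ A_n and A_{n+1} = ∪_{i=1}^N (r_i A_n + β_i) where r_i > 0, Σ_i r_i = 1, and each A_n has projections of finite measure. Then for each angle θ, the sequence α_n(θ) = |π_θ A_n| is convex: α_{n}(θ) − α_{n+1}(θ) ≤ α_{n−1}(θ) − α_n(θ). -/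
open MeasureTheory

section Aux
open Set Pointwise

lemma vol_affine_image (c b : ℝ) (hc : 0 ≤ c) (s : Set ℝ) :
    volume ((fun x => c * x + b) '' s) = ENNReal.ofReal c * volume s := by
  have h1 : (fun x => c * x + b) '' s = (fun x => x + b) '' (c • s) := by
    rw [← Set.image_smul, Set.image_image]
    simp [smul_eq_mul]
  rw [h1, Set.image_add_right, measure_preimage_add_right,
    Measure.addHaar_smul_of_nonneg _ hc]
  simp


lemma key_step {N : ℕ} (r : Fin N → ℝ) (b : Fin N → ℝ)
    (hr : ∀ i, 0 < r i) (hsum : ∑ i, r i = 1)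
    (B C : Set ℝ) (hCB : C ⊆ B) (hB : volume B ≠ ⊤) :
    volume (⋃ i, (fun x => r i * x + b i) '' B)
      - volume (⋃ i, (fun x => r i * x + b i) '' C)
      ≤ volume B - volume C := by
  set g : Fin N → ℝ → ℝ := fun i x => r i * x + b i with hg
  have hC : volume C ≠ ⊤ := fun h => hB (top_le_iff.mp (h ▸ measure_mono hCB))
  set H : Set ℝ := toMeasurable volume B with hH
  set K : Set ℝ := toMeasurable volume C ∩ H with hK
  have hHm : MeasurableSet H := measurableSet_toMeasurable _ _
  have hKm : MeasurableSet K := (measurableSet_toMeasurable _ _).inter hHm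
  have hCH : C ⊆ H := hCB.trans (subset_toMeasurable _ _)
  have hCK : C ⊆ K := subset_inter (subset_toMeasurable _ _) hCH
  have hKH : K ⊆ H := inter_subset_right
  -- hull property of K
  have hull : ∀ t : Set ℝ, MeasurableSet t → volume (K ∩ t) = volume (C ∩ t) := by
    intro t ht
    have h1 : K ∩ t = toMeasurable volume C ∩ (H ∩ t) := by
      rw [hK]; ac_rfl
    rw [h1, Measure.measure_toMeasurable_inter (hHm.inter ht) hC,
      ← inter_assoc, inter_eq_self_of_subset_left hCH]
  have hKC : volume K = volume C := by
    simpa using hull Set.univ MeasurableSet.univ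
  have hKfin : volume K ≠ ⊤ := hKC ▸ hC
  -- claim 1 : volume (⋃ g i '' K) ≤ volume (⋃ g i '' C)
  set D : Set ℝ := ⋃ i, g i '' C with hD
  set M : Set ℝ := toMeasurable volume D with hM
  have hMm : MeasurableSet M := measurableSet_toMeasurable _ _
  have claim1 : volume (⋃ i, g i '' K) ≤ volume D := by
    have hnull : ∀ i, volume (g i '' K \ M) = 0 := by
      intro i
      have h1 : g i '' K \ M = g i '' (K \ g i ⁻¹' M) := by
        rw [Set.image_diff_preimage]
      have hmeas : MeasurableSet (g i ⁻¹' M)ᶜ :=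
        (hMm.preimage (by fun_prop)).compl
      have hsub : C ⊆ g i ⁻¹' M := by
        intro x hx
        exact subset_toMeasurable _ _ (Set.mem_iUnion.2 ⟨i, Set.mem_image_of_mem _ hx⟩)
      have h2 : volume (K \ g i ⁻¹' M) = 0 := by
        rw [Set.diff_eq, hull _ hmeas, ← Set.diff_eq,
          Set.diff_eq_empty.mpr hsub, measure_empty]
      rw [h1, vol_affine_image _ _ (hr i).le, h2, mul_zero]
    have hdiff0 : volume ((⋃ i, g i '' K) \ M) = 0 := by
      rw [← nonpos_iff_eq_zero]
      calc volume ((⋃ i, g i '' K) \ M) = volume (⋃ i, (g i '' K \ M)) := by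
            rw [Set.iUnion_diff]
        _ ≤ ∑ i, volume (g i '' K \ M) := measure_iUnion_fintype_le _ _
        _ = 0 := by simp [hnull]
    calc volume (⋃ i, g i '' K)
        ≤ volume ((⋃ i, g i '' K) ∩ M) + volume ((⋃ i, g i '' K) \ M) :=
          measure_le_inter_add_diff _ _ _
      _ ≤ volume M + 0 := add_le_add (measure_mono inter_subset_right) hdiff0.le
      _ = volume D := by rw [add_zero, hM, measure_toMeasurable]
  -- claim 3
  have claim3 : volume (⋃ i, g i '' (H \ K)) ≤ volume B - volume C := by
    calc volume (⋃ i, g i '' (H \ K)) ≤ ∑ i, volume (g i '' (H \ K)) :=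
          measure_iUnion_fintype_le _ _
      _ = ∑ i, ENNReal.ofReal (r i) * volume (H \ K) :=
          Finset.sum_congr rfl fun i _ => vol_affine_image _ _ (hr i).le _
      _ = volume (H \ K) := by
          rw [← Finset.sum_mul, ← ENNReal.ofReal_sum_of_nonneg (fun i _ => (hr i).le),
            hsum, ENNReal.ofReal_one, one_mul]
      _ = volume H - volume K := measure_diff hKH hKm.nullMeasurableSet hKfin
      _ = volume B - volume C := by rw [hH, measure_toMeasurable, hKC]
  -- assemble
  rw [tsub_le_iff_right]
  calc volume (⋃ i, g i '' B) ≤ volume (⋃ i, g i '' H) :=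
        measure_mono (Set.iUnion_mono fun i => Set.image_mono (subset_toMeasurable _ _))
    _ ≤ volume ((⋃ i, g i '' (H \ K)) ∪ ⋃ i, g i '' K) := by
        apply measure_mono
        rw [← Set.iUnion_union_distrib]
        refine Set.iUnion_mono fun i => ?_
        rw [← Set.image_union, Set.diff_union_of_subset hKH]
    _ ≤ volume (⋃ i, g i '' (H \ K)) + volume (⋃ i, g i '' K) := measure_union_le _ _
    _ ≤ (volume B - volume C) + volume D := add_le_add claim3 claim1

end Aux

/-- Orthogonal projection onto the line through the origin at angle θ. -/
noncomputable def proj (θ : ℝ) (p : EuclideanSpace ℝ (Fin 2)) : ℝ :=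
  p 0 * Real.cos θ + p 1 * Real.sin θ

/-- For a decreasing sequence of planar sets satisfying a self-similar
recursion with contraction ratios summing to 1, the sequence of projection
lengths is convex in every direction. -/
theorem proj_length_convex (N : ℕ) (r : Fin N → ℝ)
    (β : Fin N → EuclideanSpace ℝ (Fin 2))
    (hr : ∀ i, 0 < r i) (hsum : ∑ i, r i = 1)
    (A : ℕ → Set (EuclideanSpace ℝ (Fin 2)))
    (hdec : ∀ n, A (n + 1) ⊆ A n)
    (hrec : ∀ n, A (n + 1) = ⋃ i, (fun p => r i • p + β i) '' A n)
    (hfin : ∀ θ n, volume (proj θ '' A n) ≠ ⊤) :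
    ∀ θ n, volume (proj θ '' A (n + 1)) - volume (proj θ '' A (n + 2))
      ≤ volume (proj θ '' A n) - volume (proj θ '' A (n + 1)) := by
  intro θ n
  have hproj : ∀ (i : Fin N) (p : EuclideanSpace ℝ (Fin 2)),
      proj θ (r i • p + β i) = r i * proj θ p + proj θ (β i) := by
    intro i p
    simp only [proj, PiLp.add_apply, PiLp.smul_apply, smul_eq_mul]
    ring
  have hB : ∀ m, proj θ '' A (m + 1) =
      ⋃ i, (fun x => r i * x + proj θ (β i)) '' (proj θ '' A m) := by
    intro m
    rw [hrec m, Set.image_iUnion]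
    refine Set.iUnion_congr fun i => ?_
    rw [Set.image_image, Set.image_image]
    exact Set.image_congr fun p _ => hproj i p
  rw [hB (n + 1)]
  nth_rewrite 1 [hB n]
  exact key_step r (fun i => proj θ (β i)) hr hsum _ _
    (Set.image_mono (hdec n)) (hfin θ n)
end
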